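/- Let g : Ω → R be α-Hölder and φ : Ω → Ω as above (φ(ω) in the local stable set of ω, with φ depending only on the past), and define g^+(ω) := g(ω) + h(Tω) - h(ω) where h(ω) = Σ_{k=0}^∞ [g(T^k ω) - g(T^k φ(ω))]. Then g^+ is constant on every local stable set: g^+(ω) = g^+(ω') whenever ω_n = ω'_n for all n ≥ 0. -/

import Mathlib

/-- The left shift on the two-sided sequence space. -/
def shiftZ {A : Type*} (ω : ℤ → A) : ℤ → A := fun n => ω (n + 1)

/-- The transfer function `h(ω) = ∑_{k≥0} [g(T^k ω) - g(T^k φ(ω))]`. -/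
noncomputable def transferFun {A : Type*} (g : (ℤ → A) → ℝ) (φ : (ℤ → A) → ℤ → A)
    (ω : ℤ → A) : ℝ :=
  ∑' k : ℕ, (g (shiftZ^[k] ω) - g (shiftZ^[k] (φ ω)))

/-- The reduced function `g⁺(ω) = g(ω) + h(Tω) - h(ω)`. -/
noncomputable def gPlus {A : Type*} (g : (ℤ → A) → ℝ) (φ : (ℤ → A) → ℤ → A)
    (ω : ℤ → A) : ℝ :=
  g ω + transferFun g φ (shiftZ ω) - transferFun g φ ω

/-!
Two points of the same local stable set agree on `[-k, ∞)` after `k` shifts, so their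
`g`-values differ by at most `C e^{-αk}`; hence all series involved converge absolutely.
Since `φ ω = φ ω'`, the difference `h ω - h ω'` telescopes to `∑ₖ [g(Tᵏω) - g(Tᵏω')]`, and
`h(Tω) - h(Tω')` is the same series without its first term `g ω - g ω'`.
-/

open Real

lemma shiftZ_iterate_apply {A : Type*} (ω : ℤ → A) (k : ℕ) (n : ℤ) :
    shiftZ^[k] ω n = ω (n + k) := by
  induction k generalizing ω with
  | zero => simp
  | succ k ih =>
    rw [Function.iterate_succ_apply, ih, shiftZ]
    congr 1
    push_cast
    ring

section HolderBounds

variable {A : Type*} {D : (ℤ → A) → (ℤ → A) → ℝ}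

/-- `D` is pinned down by `hD0` and `hDe`: it is `e^{-m}` for `m` the least `|n|` with
`ω n ≠ ω' n`. -/
lemma mem_Icc_exp_neg_of_eqOn
    (hD0 : ∀ ω ω' : ℤ → A, (∀ n : ℤ, ω n = ω' n) → D ω ω' = 0)
    (hDe : ∀ (ω ω' : ℤ → A) (N : ℕ), (∀ n : ℤ, |n| < (N : ℤ) → ω n = ω' n) →
      ¬(∀ n : ℤ, |n| < (N : ℤ) + 1 → ω n = ω' n) → D ω ω' = exp (-(N : ℝ)))
    {ω ω' : ℤ → A} {N : ℕ} (h : ∀ n : ℤ, |n| < (N : ℤ) → ω n = ω' n) :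
    D ω ω' ∈ Set.Icc 0 (exp (-(N : ℝ))) := by
  by_cases hall : ∀ n, ω n = ω' n
  · rw [hD0 _ _ hall]
    exact ⟨le_rfl, (exp_pos _).le⟩
  classical
  obtain ⟨n₀, hn₀⟩ := not_forall.1 hall
  have hex : ∃ m : ℕ, ∃ n : ℤ, n.natAbs = m ∧ ω n ≠ ω' n := ⟨_, n₀, rfl, hn₀⟩
  obtain ⟨n₁, hn₁m, hn₁⟩ := Nat.find_spec hex
  have hbelow : ∀ n : ℤ, |n| < (Nat.find hex : ℤ) → ω n = ω' n := by
    intro n hn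
    by_contra hne
    rw [Int.abs_eq_natAbs] at hn
    exact Nat.find_min hex (by omega) ⟨n, rfl, hne⟩
  have hNm : N ≤ Nat.find hex := by
    by_contra hlt
    exact hn₁ (h n₁ (by rw [Int.abs_eq_natAbs]; omega))
  rw [hDe _ _ _ hbelow fun h' => hn₁ (h' n₁ (by rw [Int.abs_eq_natAbs]; omega))]
  exact ⟨(exp_pos _).le, exp_le_exp.2 (by simpa using hNm)⟩

lemma abs_sub_le_of_eqOn
    (hD0 : ∀ ω ω' : ℤ → A, (∀ n : ℤ, ω n = ω' n) → D ω ω' = 0)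
    (hDe : ∀ (ω ω' : ℤ → A) (N : ℕ), (∀ n : ℤ, |n| < (N : ℤ) → ω n = ω' n) →
      ¬(∀ n : ℤ, |n| < (N : ℤ) + 1 → ω n = ω' n) → D ω ω' = exp (-(N : ℝ)))
    {g : (ℤ → A) → ℝ} {α C : ℝ} (hα : 0 < α) (hC : 0 ≤ C)
    (hg : ∀ ω ω' : ℤ → A, |g ω - g ω'| ≤ C * (D ω ω') ^ α)
    {ω ω' : ℤ → A} {N : ℕ} (h : ∀ n : ℤ, |n| < (N : ℤ) → ω n = ω' n) :
    |g ω - g ω'| ≤ C * exp (-α) ^ N := by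
  obtain ⟨hD_nonneg, hD_le⟩ := mem_Icc_exp_neg_of_eqOn hD0 hDe h
  calc |g ω - g ω'| ≤ C * D ω ω' ^ α := hg ω ω'
    _ ≤ C * exp (-(N : ℝ)) ^ α := by gcongr
    _ = C * exp (-α) ^ N := by rw [← exp_mul, ← exp_nat_mul]; ring_nf

lemma summable_sub_shiftZ_iterate
    (hD0 : ∀ ω ω' : ℤ → A, (∀ n : ℤ, ω n = ω' n) → D ω ω' = 0)
    (hDe : ∀ (ω ω' : ℤ → A) (N : ℕ), (∀ n : ℤ, |n| < (N : ℤ) → ω n = ω' n) →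
      ¬(∀ n : ℤ, |n| < (N : ℤ) + 1 → ω n = ω' n) → D ω ω' = exp (-(N : ℝ)))
    {g : (ℤ → A) → ℝ} {α C : ℝ} (hα : 0 < α) (hC : 0 ≤ C)
    (hg : ∀ ω ω' : ℤ → A, |g ω - g ω'| ≤ C * (D ω ω') ^ α)
    {ω ω' : ℤ → A} (h : ∀ n : ℤ, 0 ≤ n → ω n = ω' n) :
    Summable fun k : ℕ => g (shiftZ^[k] ω) - g (shiftZ^[k] ω') := by
  refine Summable.of_norm_bounded ((summable_geometric_of_lt_one (exp_pos _).le
    (exp_lt_one_iff.2 (neg_lt_zero.2 hα))).mul_left C) fun k => ?_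
  refine abs_sub_le_of_eqOn hD0 hDe hα hC hg fun n hn => ?_
  rw [shiftZ_iterate_apply, shiftZ_iterate_apply]
  exact h _ (by rw [abs_lt] at hn; omega)

end HolderBounds

lemma transferFun_sub_eq_tsum {A : Type*} {g : (ℤ → A) → ℝ} {φ : (ℤ → A) → ℤ → A}
    {ω ω' : ℤ → A} (hφ : φ ω = φ ω')
    (hω : Summable fun k : ℕ => g (shiftZ^[k] ω) - g (shiftZ^[k] (φ ω)))
    (hω' : Summable fun k : ℕ => g (shiftZ^[k] ω') - g (shiftZ^[k] (φ ω'))) :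
    transferFun g φ ω - transferFun g φ ω' =
      ∑' k : ℕ, (g (shiftZ^[k] ω) - g (shiftZ^[k] ω')) := by
  rw [transferFun, transferFun, ← hω.tsum_sub hω', hφ]
  exact tsum_congr fun k => by ring

theorem gPlus_constant_on_stable_sets_general {A : Type*}
    (D : (ℤ → A) → (ℤ → A) → ℝ)
    (hD0 : ∀ ω ω' : ℤ → A, (∀ n : ℤ, ω n = ω' n) → D ω ω' = 0)
    (hDe : ∀ (ω ω' : ℤ → A) (N : ℕ), (∀ n : ℤ, |n| < (N : ℤ) → ω n = ω' n) →
      ¬(∀ n : ℤ, |n| < (N : ℤ) + 1 → ω n = ω' n) → D ω ω' = Real.exp (-(N : ℝ)))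
    (g : (ℤ → A) → ℝ) (α C : ℝ) (hα : 0 < α) (hC : 0 ≤ C)
    (hg : ∀ ω ω' : ℤ → A, |g ω - g ω'| ≤ C * (D ω ω') ^ α)
    (φ : (ℤ → A) → ℤ → A)
    (hφstable : ∀ (ω : ℤ → A) (n : ℤ), 0 ≤ n → φ ω n = ω n)
    (hφdep : ∀ ω ω' : ℤ → A, (∀ n : ℤ, 0 ≤ n → ω n = ω' n) → φ ω = φ ω') :
    ∀ ω ω' : ℤ → A, (∀ n : ℤ, 0 ≤ n → ω n = ω' n) →
      gPlus g φ ω = gPlus g φ ω' := by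
  intro ω ω' hst
  have summable {ω ω' : ℤ → A} (h : ∀ n : ℤ, 0 ≤ n → ω n = ω' n) :=
    summable_sub_shiftZ_iterate hD0 hDe hα hC hg h
  have summable_φ (ω : ℤ → A) := summable fun n hn => (hφstable ω n hn).symm
  have hst_shift : ∀ n : ℤ, 0 ≤ n → shiftZ ω n = shiftZ ω' n := fun n hn => hst (n + 1) (by omega)
  have h_diff := transferFun_sub_eq_tsum (hφdep _ _ hst) (summable_φ ω) (summable_φ ω')
  have h_shift_diff := transferFun_sub_eq_tsum (hφdep _ _ hst_shift)
    (summable_φ (shiftZ ω)) (summable_φ (shiftZ ω'))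
  have h_split := (summable hst).tsum_eq_zero_add
  simp only [Function.iterate_succ_apply, Function.iterate_zero_apply] at h_split
  rw [gPlus, gPlus]
  linarith

/-- The reduced function `g⁺ = g + h∘T - h` is constant on every local stable set:
`g⁺(ω) = g⁺(ω')` whenever `ω_n = ω'_n` for all `n ≥ 0`. -/
theorem gPlus_constant_on_stable_sets {A : Type*} [Fintype A]
    (D : (ℤ → A) → (ℤ → A) → ℝ)
    (hDnn : ∀ ω ω', 0 ≤ D ω ω')
    (hD0 : ∀ ω ω' : ℤ → A, (∀ n : ℤ, ω n = ω' n) → D ω ω' = 0)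
    (hDe : ∀ (ω ω' : ℤ → A) (N : ℕ), (∀ n : ℤ, |n| < (N : ℤ) → ω n = ω' n) →
      ¬(∀ n : ℤ, |n| < (N : ℤ) + 1 → ω n = ω' n) → D ω ω' = Real.exp (-(N : ℝ)))
    (g : (ℤ → A) → ℝ) (α C : ℝ) (hα : 0 < α) (hC : 0 ≤ C)
    (hg : ∀ ω ω' : ℤ → A, |g ω - g ω'| ≤ C * (D ω ω') ^ α)
    (φ : (ℤ → A) → ℤ → A)
    (hφstable : ∀ (ω : ℤ → A) (n : ℤ), 0 ≤ n → φ ω n = ω n)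
    (hφdep : ∀ ω ω' : ℤ → A, (∀ n : ℤ, 0 ≤ n → ω n = ω' n) → φ ω = φ ω') :
    ∀ ω ω' : ℤ → A, (∀ n : ℤ, 0 ≤ n → ω n = ω' n) →
      gPlus g φ ω = gPlus g φ ω' :=
  gPlus_constant_on_stable_sets_general D hD0 hDe g α C hα hC hg φ hφstable hφdep
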